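/- arXiv:1307.8245 — 4 statements merged into one kernel-verified Lean document; each statement's English description precedes it below -/
import Mathlib

section
/- Let v_ℒ ∈ B_cris,L satisfy φ(v_ℒ) = p·v_ℒ and v_ℒ − ℒ ∈ L⊗Fil^1 B_dR (for ℒ ∈ L⊗_{Q_p}K). In D ⊗_{K_0} B_st (D as above), the elements v_1 = t·f_3, v_2 = f_2 + (u+v_ℒ)f_3, v_3 = t^{-1}(f_1 + 2(u+v_ℒ)f_2 + (u+v_ℒ)²f_3) satisfy φ(v_i) = v_i and N(v_i) = 0 for all i. -/
/-! Put `w = u + v_ℒ`. Then `v₂ = exp(w N_D) f₂` and `v₃ = t⁻¹ exp(w N_D) f₁`, where `N_D` is the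
monodromy of `D`. The operator `N` on `D ⊗ B_st` is `N_D ⊗ 1 + 1 ⊗ N` with `N` a derivation of
`B_st`, and `N w = -1` makes the two terms cancel on `exp(w N_D)`; `N t = 0` handles the factors of
`t`. Frobenius fixes the `vᵢ` because the scalings `φ w = p w` and `φ t = p t` exactly cancel the
slopes `p, 1, p⁻¹` of `f₁, f₂, f₃`. -/

namespace Stmt8

variable {B : Type}

/-- `φ` on `D ⊗_{K₀} B_st` for the rank-3 module `D` with basis `f₁,f₂,f₃`,
`φ(f₁)=pf₁, φ(f₂)=f₂, φ(f₃)=p⁻¹f₃`; coordinates `(b₁,b₂,b₃) ↔ b₁f₁+b₂f₂+b₃f₃`. -/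
def phi3 [CommRing B] (pe pinv : B) (φ : B → B) (x : B × B × B) : B × B × B :=
  (pe * φ x.1, φ x.2.1, pinv * φ x.2.2)

/-- the monodromy operator `N` on `D ⊗_{K₀} B_st` (`N(f₁)=2f₂, N(f₂)=f₃, N(f₃)=0`). -/
def N3 [CommRing B] (N : B → B) (x : B × B × B) : B × B × B :=
  (N x.1, 2 * x.1 + N x.2.1, x.2.1 + N x.2.2)

end Stmt8

namespace Stmt8

section

variable {B : Type} [CommRing B]

def derivationOfLeibniz (N : B →+ B) (hLeib : ∀ a b : B, N (a * b) = a * N b + N a * b) :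
    Derivation ℤ B B :=
  Derivation.mk' N.toIntLinearMap fun a b => by
    simp only [AddMonoidHom.coe_toIntLinearMap, hLeib, smul_eq_mul]
    ring

@[simp]
theorem coe_derivationOfLeibniz (N : B →+ B) (hLeib) : ⇑(derivationOfLeibniz N hLeib) = N :=
  rfl

theorem mul_map_eq_self_of_mul_eq_one {φ : B →+* B} {pe t s : B} (hφt : φ t = pe * t)
    (hts : t * s = 1) : pe * φ s = s := by
  have h : pe * t * φ s = 1 := by rw [← hφt, ← map_mul, hts, map_one]
  calc pe * φ s = pe * t * φ s * s := by linear_combination -(pe * φ s) * hts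
    _ = s := by rw [h, one_mul]

variable {φ : B →+* B} {pe pinv : B} (hpinv : pe * pinv = 1)
include hpinv

theorem phi3_f3_eq_self {t : B} (hφt : φ t = pe * t) :
    phi3 pe pinv φ (0, 0, t) = (0, 0, t) := by
  simp only [phi3, map_zero, mul_zero, hφt, Prod.mk.injEq, true_and]
  linear_combination t * hpinv

theorem phi3_expN_f2_eq_self {w : B} (hφw : φ w = pe * w) :
    phi3 pe pinv φ (0, 1, w) = (0, 1, w) := by
  simp only [phi3, map_zero, mul_zero, map_one, hφw, Prod.mk.injEq, true_and]
  linear_combination w * hpinv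

theorem phi3_expN_f1_eq_self {w s : B} (hφw : φ w = pe * w) (hφs : pe * φ s = s) :
    phi3 pe pinv φ (s, 2 * w * s, w ^ 2 * s) = (s, 2 * w * s, w ^ 2 * s) := by
  simp only [phi3, map_mul, map_pow, map_ofNat, hφw, hφs, Prod.mk.injEq, true_and]
  constructor
  · linear_combination 2 * w * hφs
  · linear_combination pinv * pe * w ^ 2 * hφs + w ^ 2 * s * hpinv

end

variable {B : Type} [CommRing B] (D : Derivation ℤ B B)

theorem N3_f3_eq_zero {t : B} (hDt : D t = 0) : N3 D (0, 0, t) = 0 := by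
  simp [N3, hDt]

theorem N3_expN_f2_eq_zero {w : B} (hDw : D w = -1) : N3 D (0, 1, w) = 0 := by
  simp [N3, hDw]

theorem N3_expN_f1_eq_zero {w s : B} (hDw : D w = -1) (hDs : D s = 0) :
    N3 D (s, 2 * w * s, w ^ 2 * s) = 0 := by
  have hD2 : D (2 : B) = 0 := by exact_mod_cast D.map_natCast 2
  simp only [N3, Derivation.leibniz, Derivation.leibniz_pow, hDw, hDs, hD2, smul_eq_mul,
    nsmul_eq_mul, Prod.mk_eq_zero]
  exact ⟨trivial, by ring, by norm_num; ring⟩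

end Stmt8

open Stmt8 in
theorem stmt_8_general (p : ℕ) (B : Type) [CommRing B]
    (φ : B →+* B) (N : B →+ B)
    (hLeib : ∀ a b : B, N (a * b) = a * N b + N a * b)
    (t u tinv pinv : B)
    (hpinv : (p : B) * pinv = 1) (htinv : t * tinv = 1)
    (hφt : φ t = p * t) (hNt : N t = 0)
    (hφu : φ u = p * u) (hNu : N u = -1)
    (vL : B) (hφvL : φ vL = p * vL) (hNvL : N vL = 0) :
    (phi3 (p : B) pinv φ (0, 0, t) = (0, 0, t) ∧ N3 (⇑N) (0, 0, t) = 0)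
    ∧ (phi3 (p : B) pinv φ (0, 1, u + vL) = (0, 1, u + vL)
        ∧ N3 (⇑N) (0, 1, u + vL) = 0)
    ∧ (phi3 (p : B) pinv φ (tinv, 2 * (u + vL) * tinv, (u + vL) ^ 2 * tinv)
          = (tinv, 2 * (u + vL) * tinv, (u + vL) ^ 2 * tinv)
        ∧ N3 (⇑N) (tinv, 2 * (u + vL) * tinv, (u + vL) ^ 2 * tinv) = 0) := by
  let D := derivationOfLeibniz N hLeib
  have hDtinv : D tinv = 0 := by
    rw [D.leibniz_of_mul_eq_one (mul_comm t tinv ▸ htinv)]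
    simp [D, hNt]
  have hφw : φ (u + vL) = p * (u + vL) := by rw [map_add, hφu, hφvL, mul_add]
  have hDw : D (u + vL) = -1 := by simp [D, hNu, hNvL]
  have hφtinv := mul_map_eq_self_of_mul_eq_one hφt htinv
  exact ⟨⟨phi3_f3_eq_self hpinv hφt, N3_f3_eq_zero D hNt⟩,
    ⟨phi3_expN_f2_eq_self hpinv hφw, N3_expN_f2_eq_zero D hDw⟩,
    ⟨phi3_expN_f1_eq_self hpinv hφw hφtinv, N3_expN_f1_eq_zero D hDw hDtinv⟩⟩

open Stmt8 in
/-- Let `v_ℒ ∈ B_cris,L` satisfy `φ(v_ℒ) = p·v_ℒ` and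
`v_ℒ − ℒ ∈ L ⊗ Fil¹B_dR`.  In `D ⊗_{K₀} B_st` the elements `v₁ = t·f₃`,
`v₂ = f₂ + (u+v_ℒ)f₃`, `v₃ = t⁻¹(f₁ + 2(u+v_ℒ)f₂ + (u+v_ℒ)²f₃)` satisfy
`φ(vᵢ) = vᵢ` and `N(vᵢ) = 0`. -/
theorem stmt_8 (p : ℕ) [Fact p.Prime] (B : Type) [CommRing B] [Algebra ℚ_[p] B]
    (φ : B →+* B) (N : B →+ B)
    (hLeib : ∀ a b : B, N (a * b) = a * N b + N a * b)
    (hNφ : ∀ b : B, N (φ b) = p * φ (N b))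
    (t u tinv pinv : B)
    (hpinv : (p : B) * pinv = 1) (htinv : t * tinv = 1)
    (hφt : φ t = p * t) (hNt : N t = 0)
    (hφu : φ u = p * u) (hNu : N u = -1)
    (vL : B) (hφvL : φ vL = p * vL) (hNvL : N vL = 0)
    (Fil1 : AddSubgroup B) (ℒB : B) (hvLFil : vL - ℒB ∈ Fil1) :
    (phi3 (p : B) pinv φ (0, 0, t) = (0, 0, t) ∧ N3 (⇑N) (0, 0, t) = 0)
    ∧ (phi3 (p : B) pinv φ (0, 1, u + vL) = (0, 1, u + vL)
        ∧ N3 (⇑N) (0, 1, u + vL) = 0)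
    ∧ (phi3 (p : B) pinv φ (tinv, 2 * (u + vL) * tinv, (u + vL) ^ 2 * tinv)
          = (tinv, 2 * (u + vL) * tinv, (u + vL) ^ 2 * tinv)
        ∧ N3 (⇑N) (tinv, 2 * (u + vL) * tinv, (u + vL) ^ 2 * tinv) = 0) :=
  stmt_8_general p B φ N hLeib t u tinv pinv hpinv htinv hφt hNt hφu hNu vL hφvL hNvL
end

section
/- Let L, K be p-adic fields as above, ℒ ∈ L⊗_{Q_p}K, and let W_1 ⊂ W_2 ⊂ W_3 be L-representations of G_K with W_1 ≅ L(1), W_2/W_1 ≅ L, W_3/W_2 ≅ L(−1), where the extension class of W_2 in H^1(G_K, L(1)) is (exp(ℒ)) + (p). If c ∈ H^1(G_K, W_3/W_1) vanishes in H^1(G_K, W_3/W_2) and lies in the image of H^1(G_K, W_3), then c comes from H^1(G_K, W_2/W_1) ≅ H^1(G_K, L), and under this identification c = (1/n)tr(γℒ)·ψ_1 + γ·ψ_2 for some γ ∈ L⊗_{Q_p}K. -/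
open scoped TensorProduct

/-- The trace map `tr : L ⊗[ℚ_p] K → L` induced by the field trace `tr_{K/ℚ_p}`. -/
noncomputable def trL (p : ℕ) [Fact p.Prime] (L K : Type) [Field L] [Field K]
    [Algebra ℚ_[p] L] [Algebra ℚ_[p] K] [FiniteDimensional ℚ_[p] K] :
    (L ⊗[ℚ_[p]] K) →ₗ[L] L :=
  (Algebra.TensorProduct.rid ℚ_[p] L L).toLinearMap.comp
    ((Algebra.trace ℚ_[p] K).baseChange L)

/-! By exactness `c` comes from `H¹(G_K, L)`, say `c = a₁ψ₁ + a₂ψ₂`. Since `c` lifts to `H¹(G_K, W₃)`,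
the connecting map `δ` kills it, and the cup-product formula `δ c = a₁ − (1/n)tr(a₂ℒ)` forces
`a₁ = (1/n)tr(a₂ℒ)`; take `γ = a₂`. -/

theorem Prod.eq_mk_of_sub_eq_zero {A B : Type*} [AddGroup A] (f : B → A) {x : A × B}
    (hx : x.1 - f x.2 = 0) : x = (f x.2, x.2) :=
  Prod.ext (sub_eq_zero.mp hx) rfl

theorem stmt_10_general (p n : ℕ) [Fact p.Prime] (L K : Type) [Field L] [Field K]
    [Algebra ℚ_[p] L] [Algebra ℚ_[p] K] [FiniteDimensional ℚ_[p] K]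
    (ℒ : L ⊗[ℚ_[p]] K)
    (H1W21 H1W31 H1W32 H1W3 : Type)
    [AddCommGroup H1W21] [AddCommGroup H1W31] [AddCommGroup H1W32] [AddCommGroup H1W3]
    [Module L H1W21] [Module L H1W31] [Module L H1W32] [Module L H1W3]
    (ι : (L × (L ⊗[ℚ_[p]] K)) ≃ₗ[L] H1W21)
    (i : H1W21 →ₗ[L] H1W31) (q : H1W31 →ₗ[L] H1W32) (π : H1W3 →ₗ[L] H1W31)
    (hexact : ∀ c : H1W31, q c = 0 → ∃ y : H1W21, i y = c)
    (δ : H1W31 →ₗ[L] L)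
    (hδ : ∀ (a₁ : L) (a₂ : L ⊗[ℚ_[p]] K),
        δ (i (ι (a₁, a₂))) = a₁ - (n : L)⁻¹ * trL p L K (a₂ * ℒ))
    (hδπ : ∀ w : H1W3, δ (π w) = 0)
    (c : H1W31) (hc1 : q c = 0) (hc2 : ∃ w : H1W3, π w = c) :
    ∃ γ : L ⊗[ℚ_[p]] K, c = i (ι ((n : L)⁻¹ * trL p L K (γ * ℒ), γ)) := by
  obtain ⟨y, rfl⟩ := hexact c hc1
  obtain ⟨a, rfl⟩ := ι.surjective y
  obtain ⟨w, hw⟩ := hc2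
  have hδa : a.1 - (n : L)⁻¹ * trL p L K (a.2 * ℒ) = 0 := by
    rw [← hδ, ← hw, hδπ]
  exact ⟨a.2, congrArg (fun x ↦ i (ι x))
    (Prod.eq_mk_of_sub_eq_zero (fun γ ↦ (n : L)⁻¹ * trL p L K (γ * ℒ)) hδa)⟩

/-- Proposition `triancase`.  Let `W₁ ⊂ W₂ ⊂ W₃` be
`L`-representations of `G_K` with `W₁ ≅ L(1)`, `W₂/W₁ ≅ L`, `W₃/W₂ ≅ L(−1)`, the
extension class of `W₂` in `H¹(G_K, L(1))` being `(exp ℒ) + (p)`.  Below: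
`ι` identifies `L × (L⊗K)` (coordinates `(a₁, a₂) ↔ a₁ψ₁ + a₂ψ₂`) with
`H¹(G_K, W₂/W₁) = H¹(G_K, L)`; `i : H¹(W₂/W₁) → H¹(W₃/W₁)` and
`q : H¹(W₃/W₁) → H¹(W₃/W₂)` come from `0 → W₂/W₁ → W₃/W₁ → W₃/W₂ → 0`, with
`ker q ⊆ range i` (exactness, since `H⁰(W₃/W₂) = 0`); `π : H¹(W₃) → H¹(W₃/W₁)`;
`δ : H¹(W₃/W₁) → H²(W₁) ≅ L` is the connecting map, which on classes from
`H¹(L)` is cup product with `(exp ℒ) + (p)`, i.e.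
`δ(a₁ψ₁ + a₂ψ₂) = (a₁ − (1/n)tr(a₂ℒ))·(ψ₁∪(p))`, and `range π ⊆ ker δ`.
If `c ∈ H¹(G_K, W₃/W₁)` vanishes in `H¹(G_K, W₃/W₂)` and lies in the image of
`H¹(G_K, W₃)`, then `c` comes from `H¹(G_K, W₂/W₁) ≅ H¹(G_K, L)` and is of the form
`(1/n)tr(γℒ)·ψ₁ + γ·ψ₂` for some `γ ∈ L ⊗[ℚ_p] K`. -/
theorem stmt_10 (p n : ℕ) [Fact p.Prime] (L K : Type) [Field L] [Field K]
    [Algebra ℚ_[p] L] [Algebra ℚ_[p] K] [FiniteDimensional ℚ_[p] K]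
    (hn : Module.finrank ℚ_[p] K = n)
    (ℒ : L ⊗[ℚ_[p]] K)
    (H1W21 H1W31 H1W32 H1W3 : Type)
    [AddCommGroup H1W21] [AddCommGroup H1W31] [AddCommGroup H1W32] [AddCommGroup H1W3]
    [Module L H1W21] [Module L H1W31] [Module L H1W32] [Module L H1W3]
    (ι : (L × (L ⊗[ℚ_[p]] K)) ≃ₗ[L] H1W21)
    (i : H1W21 →ₗ[L] H1W31) (q : H1W31 →ₗ[L] H1W32) (π : H1W3 →ₗ[L] H1W31)
    (hexact : ∀ c : H1W31, q c = 0 → ∃ y : H1W21, i y = c)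
    (δ : H1W31 →ₗ[L] L)
    (hδ : ∀ (a₁ : L) (a₂ : L ⊗[ℚ_[p]] K),
        δ (i (ι (a₁, a₂))) = a₁ - (n : L)⁻¹ * trL p L K (a₂ * ℒ))
    (hδπ : ∀ w : H1W3, δ (π w) = 0)
    (c : H1W31) (hc1 : q c = 0) (hc2 : ∃ w : H1W3, π w = c) :
    ∃ γ : L ⊗[ℚ_[p]] K, c = i (ι ((n : L)⁻¹ * trL p L K (γ * ℒ), γ)) :=
  stmt_10_general p n L K ℒ H1W21 H1W31 H1W32 H1W3 ι i q π hexact δ hδ hδπ c hc1 hc2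
end

section
/- Let ω_0 ∈ B_cris satisfy φ^f(ω_0) − ω_0 = 1, and set ω_i = φ^i(ω_0) for 0 ≤ i < f. Let D' be the rank-2 (φ,N)-module over L⊗_{Q_p}K_0 ≅ ∏_{i=0}^{f-1}L with basis v'_1, v'_2, N = 0, φ(v'_1) = v'_1, φ(v'_2) = v'_2 + (α,0,…,0)v'_1 (α ∈ L), where φ permutes the factors cyclically. Then the element w = v'_2 + (−αω_i)_{0≤i<f}·v'_1 of D'⊗_{K_0}B_st satisfies φ(w) = w, and {v'_1, w} is a B_{e,L}-basis of X_st(D') = (D'⊗_{K_0}B_st)^{φ=1,N=0}. -/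
/-!
The Frobenius of `D' ⊗ B_st` is a twist of the ring endomorphism `Φ` of `∏_{i<f} B` by the
unipotent matrix `[[1, αe], [0, 1]]`. Any `u` with `Φ u = u - αe` untwists it: `(x, y)` is
fixed exactly when `y` and `x - y u` are `Φ`-fixed. For `u = (-α ωᵢ)ᵢ` this relation is
`φ^f(ω₀) = ω₀ + 1`, which only shows up in the coordinate `i = 0`, where the cyclic shift
wraps around.
-/

namespace Stmt11

variable {B : Type}

/-- The Frobenius on `D' ⊗_{K₀} B_st ≅ (∏_{i<f} B)²` acting on one coordinate block:
cyclic shift of the `f` factors (coming from `L ⊗ K₀ ≅ ∏_{i<f} L`) composed with the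
crystalline Frobenius `φB` of `B`. -/
def Phi (f : ℕ) [NeZero f] (φB : B → B) (x : Fin f → B) : Fin f → B :=
  fun i => φB (x (i - 1))

end Stmt11

namespace Stmt11

section Twist

variable {R : Type} [CommRing R] (Φ : R →+* R) (e : R)

def twistedFrobenius (z : R × R) : R × R :=
  (Φ z.1 + e * Φ z.2, Φ z.2)

variable {Φ e} {u : R}

theorem twistedFrobenius_mk_one_eq_self (hu : Φ u = u - e) :
    twistedFrobenius Φ e (u, 1) = (u, 1) := by
  simp [twistedFrobenius, hu]

theorem twistedFrobenius_eq_self_iff (hu : Φ u = u - e) (z : R × R) :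
    twistedFrobenius Φ e z = z ↔ ∃ c d : R, Φ c = c ∧ Φ d = d ∧ z = (c + d * u, d) := by
  obtain ⟨x, y⟩ := z
  simp only [twistedFrobenius, Prod.mk.injEq]
  constructor
  · rintro ⟨hx, hy⟩
    refine ⟨x - y * u, y, ?_, hy, by ring, rfl⟩
    rw [map_sub, map_mul, hu, hy]
    rw [hy] at hx
    linear_combination hx
  · rintro ⟨c, d, hc, hd, rfl, rfl⟩
    refine ⟨?_, hd⟩
    rw [map_add, map_mul, hc, hd, hu]
    ring

end Twist

section Phi

variable {B : Type} {f : ℕ} [NeZero f]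

def phiRingHom [NonAssocSemiring B] (φ : B →+* B) : (Fin f → B) →+* (Fin f → B) :=
  RingHom.pi fun i => φ.comp (Pi.evalRingHom (fun _ => B) (i - 1))

@[simp]
theorem coe_phiRingHom [NonAssocSemiring B] (φ : B →+* B) :
    ⇑(phiRingHom (f := f) φ) = Phi f φ :=
  rfl

theorem Phi_iterate_of_iterate_eq_add_one [AddMonoidWithOne B] {φ : B → B} {x : B}
    (hx : φ^[f] x = x + 1) :
    Phi f φ (fun i : Fin f => φ^[i] x) = (fun i : Fin f => φ^[i] x) + Pi.single 0 1 := by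
  obtain ⟨n, rfl⟩ := Nat.exists_eq_add_one_of_ne_zero (NeZero.ne f)
  funext i
  simp only [Phi, Pi.add_apply, ← Function.iterate_succ_apply' φ, Fin.coe_sub_one]
  rcases eq_or_ne i 0 with rfl | hi
  · simpa using hx
  · rw [if_neg hi, Pi.single_eq_of_ne hi, add_zero]
    exact congrArg (φ^[·] x) (Nat.sub_one_add_one (Fin.val_ne_zero_iff.mpr hi))

end Phi

end Stmt11

open Stmt11 in
/-- Coordinates: `(x, y) ↔ x·v'₁ + y·v'₂` with `x, y ∈ ∏_{i<f} B`, and `αe = (α, 0, …, 0)`. -/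
theorem stmt_11 (L B : Type) [Field L] [CommRing B] [Algebra L B]
    (f : ℕ) [NeZero f]
    (φB : B →+* B) (hφL : ∀ l : L, φB (algebraMap L B l) = algebraMap L B l)
    (ω0 : B) (hω : φB^[f] ω0 = ω0 + 1)
    (α : L) :
    -- ω, αe, w, ΦM:
    ∀ ω : Fin f → B, (∀ i : Fin f, ω i = φB^[(i : ℕ)] ω0) →
    ∀ αe : Fin f → B, (∀ i : Fin f, αe i = if i = 0 then algebraMap L B α else 0) →
    ∀ w : (Fin f → B) × (Fin f → B),
      (w = (fun i => -(algebraMap L B α) * ω i, 1)) →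
    ∀ ΦM : ((Fin f → B) × (Fin f → B)) → ((Fin f → B) × (Fin f → B)),
      (∀ z, ΦM z = (Phi f φB z.1 + αe * Phi f φB z.2, Phi f φB z.2)) →
      (ΦM w = w)
      ∧ (∀ z, ΦM z = z ↔ ∃ c d : Fin f → B,
            Phi f φB c = c ∧ Phi f φB d = d ∧ z = (c + d * w.1, d))
      ∧ (∀ c d : Fin f → B, (c + d * w.1, d) = ((0 : Fin f → B), (0 : Fin f → B))
            → c = 0 ∧ d = 0) := by
  intro ω hω_def αe hαe w rfl ΦM hΦM
  obtain rfl : ΦM = twistedFrobenius (phiRingHom φB) αe := funext hΦM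
  have hωΦ : Phi f φB ω = ω + Pi.single 0 1 := by
    obtain rfl : ω = fun i : Fin f => φB^[i] ω0 := funext hω_def
    exact Phi_iterate_of_iterate_eq_add_one hω
  have hu : phiRingHom φB (fun i => -algebraMap L B α * ω i)
      = (fun i => -algebraMap L B α * ω i) - αe := by
    funext i
    have hωΦi := congrFun hωΦ i
    simp only [coe_phiRingHom, Phi, Pi.add_apply] at hωΦi ⊢
    rw [map_mul, map_neg, hφL, hωΦi, Pi.sub_apply, hαe]
    rcases eq_or_ne i 0 with rfl | hi
    · simp only [Pi.single_eq_same, if_pos]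
      ring
    · simp [hi]
  refine ⟨twistedFrobenius_mk_one_eq_self hu, fun z => ?_, fun c d h => ?_⟩
  · simpa using twistedFrobenius_eq_self_iff hu z
  · obtain ⟨hc, rfl⟩ := Prod.mk.injEq _ _ _ _ ▸ h
    simpa using hc
end

section
/- Let M be a module over S⊗K_0 ≅ ∏_{i=0}^{f-1}S with a φ^f-action, free of rank 1 over each factor copy appropriately, containing a φ-stable situation as follows: M = Hom(D_cris(V_0), D_cris(V)) is an extension of the trivial rank-1 φ-module by itself over S = L[x]/(x²). Then there exists a lift v_0 of the identity of End(D_cris(V_0)) in Hom(D_cris(V_0), D_cris(V)) such that in the basis {v_0, x·v_0}, the matrix of φ is [[1, (β'/α, 0, …, 0)],[0,1]], where β' is the derivative of β at x = 0 and the entry lives in L⊗_{Q_p}K_0 ≅ ∏_{i=0}^{f-1}L. Specifically, given any lift v'_0, the element v_0 = Σ_{i=0}^{f-1} φ^i((1,0,…,0)·v'_0) works. -/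
/-!
The translates `φ^i (e₀ • v'₀)` of the `0`-th component of the lift lie in the factors
`σ^i e₀`, which are orthogonal idempotents summing to `1`. Hence `v₀` reduces to
`(∑ σ^i ē₀) • Id = Id`, and telescoping shows that `φ v₀ - v₀ = φ^f (e₀ • v'₀) - e₀ • v'₀`,
which is `(β'/α) x • (e₀ • v'₀)` because `φ^f` is the scalar `1 + (β'/α) x`. Orthogonality gives
`e₀ • v₀ = e₀ • v'₀`, so this defect is `(β'/α, 0, …, 0) x • v₀`.
-/

open scoped DualNumber
open Finset

theorem iterate_map_smul_of_map_smul {R M : Type*} [SMul R M] {σ : R → R} {φ : M → M}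
    (h : ∀ (r : R) (m : M), φ (r • m) = σ r • φ m) (n : ℕ) (r : R) (m : M) :
    φ^[n] (r • m) = σ^[n] r • φ^[n] m := by
  induction n generalizing r m with
  | zero => rfl
  | succ n ih => rw [Function.iterate_succ_apply, h, ih, Function.iterate_succ_apply,
      Function.iterate_succ_apply]

theorem map_sum_range_iterate {M : Type*} [AddCommGroup M] (φ : M →+ M) (n : ℕ) (w : M) :
    φ (∑ k ∈ range n, φ^[k] w) = ∑ k ∈ range n, φ^[k] w + (φ^[n] w - w) := by
  have telescope := sum_range_sub (fun k => φ^[k] w) n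
  rw [Function.iterate_zero_apply] at telescope
  rw [← telescope, ← sum_add_distrib, map_sum]
  refine sum_congr rfl fun k _ => ?_
  rw [Function.iterate_succ_apply', add_sub_cancel]

theorem sum_range_iterate_smul_of_apply_eq_self {R M : Type*} [Semiring R] [AddCommMonoid M]
    [Module R M] {σ : R → R} {φ : M → M} (h : ∀ (r : R) (m : M), φ (r • m) = σ r • φ m)
    {x : M} (hx : φ x = x) (n : ℕ) (r : R) :
    ∑ k ∈ range n, φ^[k] (r • x) = (∑ k ∈ range n, σ^[k] r) • x := by
  simp only [iterate_map_smul_of_map_smul h, Function.iterate_fixed hx, sum_smul]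

theorem smul_sum_range_iterate_smul {R M : Type*} [Semiring R] [AddCommMonoid M] [Module R M]
    {σ : R → R} {φ : M → M} (h : ∀ (r : R) (m : M), φ (r • m) = σ r • φ m) {e : R}
    (he : e * e = e) {n : ℕ} (horth : ∀ k, 0 < k → k < n → e * σ^[k] e = 0) (hn : 0 < n)
    (v : M) :
    e • ∑ k ∈ range n, φ^[k] (e • v) = e • v := by
  obtain ⟨n, rfl⟩ := Nat.exists_eq_add_of_lt hn
  rw [zero_add, sum_range_succ', smul_add, smul_sum]
  rw [sum_eq_zero fun k hk => ?_, zero_add, Function.iterate_zero_apply, smul_smul, he]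
  rw [iterate_map_smul_of_map_smul h, smul_smul, horth _ k.succ_pos (by simpa using hk),
    zero_smul]

section CyclicShift

open Fin.NatCast

variable {A : Type*} {f : ℕ} [NeZero f] {s : (Fin f → A) → Fin f → A}

theorem iterate_shift_apply (hs : ∀ r i, s r i = r (i + 1)) (n : ℕ) (r : Fin f → A)
    (i : Fin f) : s^[n] r i = r (i + n) := by
  induction n generalizing r with
  | zero => simp
  | succ n ih => rw [Function.iterate_succ_apply, ih, hs, Nat.cast_succ, add_assoc]

theorem sum_range_iterate_shift [AddCommMonoid A] (hs : ∀ r i, s r i = r (i + 1))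
    (r : Fin f → A) : ∑ k ∈ range f, s^[k] r = fun _ => ∑ i, r i := by
  funext j
  rw [Finset.sum_apply, ← Fin.sum_univ_eq_sum_range (fun k => s^[k] r j)]
  simp only [iterate_shift_apply hs, Fin.cast_val_eq_self]
  exact Fintype.sum_equiv (Equiv.addLeft j) _ _ fun _ => rfl

theorem single_mul_iterate_shift_single [MulZeroClass A] (hs : ∀ r i, s r i = r (i + 1))
    (i : Fin f) (a b : A) {n : ℕ} (hn : 0 < n) (hnf : n < f) :
    Pi.single i a * s^[n] (Pi.single i b) = 0 := by
  have hn0 : (n : Fin f) ≠ 0 := fun h =>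
    hn.ne' (Nat.eq_zero_of_dvd_of_lt (Fin.natCast_eq_zero.mp h) hnf)
  funext j
  rw [Pi.mul_apply, iterate_shift_apply hs]
  by_cases hj : j = i
  · rw [hj, Pi.single_eq_of_ne (i' := i + n) (add_ne_left.mpr hn0), mul_zero, Pi.zero_apply]
  · rw [Pi.single_eq_of_ne hj, zero_mul, Pi.zero_apply]

end CyclicShift

theorem stmt_15_general (L : Type) [Field L] (f : ℕ) [NeZero f]
    (M : Type) [AddCommGroup M] [Module (Fin f → DualNumber L) M]
    (σ : (Fin f → DualNumber L) →+* (Fin f → DualNumber L))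
    (hσ : ∀ (r : Fin f → DualNumber L) (i : Fin f), σ r i = r (i + 1))
    (φM : M →+ M)
    (hsl : ∀ (r : Fin f → DualNumber L) (m : M), φM (r • m) = σ r • φM m)
    (β : DualNumber L)
    (hf : ∀ m : M,
      φM^[f] m = ((fun _ => 1 + (β.snd / β.fst) • DualNumber.eps : Fin f → DualNumber L)) • m)
    (M0 : Type) [AddCommGroup M0] [Module (Fin f → L) M0]
    (π : M →+ M0)
    (hπs : ∀ (r : Fin f → DualNumber L) (m : M),
      π (r • m) = (fun i => (r i).fst) • π m)
    (φM0 : M0 →+ M0)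
    (hπφ : ∀ m : M, π (φM m) = φM0 (π m))
    (hsl0 : ∀ (s : Fin f → L) (m : M0), φM0 (s • m) = (fun i => s (i + 1)) • φM0 m)
    (idM0 : M0) (hid : φM0 idM0 = idM0)
    (v0' : M) (hv0' : π v0' = idM0) :
    ∀ e0 : Fin f → DualNumber L, (∀ i, e0 i = if i = 0 then 1 else 0) →
    ∀ v0 : M, v0 = ∑ i ∈ Finset.range f, φM^[i] (e0 • v0') →
      π v0 = idM0
      ∧ φM v0 = v0
          + ((fun i => if i = 0 then (β.snd / β.fst) • DualNumber.eps else 0 :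
              Fin f → DualNumber L)) • v0 := by
  intro e0 he0 v0 hv0
  replace he0 : e0 = Pi.single 0 1 := funext fun i => by rw [he0, Pi.single_apply]
  constructor
  · have hreduce : (fun i => (e0 i).fst) = (Pi.single 0 1 : Fin f → L) :=
      funext fun i => by
        rw [he0, Pi.apply_single (fun _ => TrivSqZeroExt.fst) (fun _ => rfl)]
        rfl
    have hproj (k : ℕ) :
        π (φM^[k] (e0 • v0')) = φM0^[k] ((Pi.single 0 1 : Fin f → L) • idM0) := by
      rw [Function.Semiconj.iterate_right hπφ k, hπs, hv0', hreduce]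
    simp_rw [hv0, map_sum, hproj, sum_range_iterate_smul_of_apply_eq_self hsl0 hid,
      sum_range_iterate_shift (fun _ _ => rfl), Finset.sum_pi_single', if_pos (mem_univ _)]
    exact one_smul _ _
  · set c : Fin f → DualNumber L := fun _ => 1 + (β.snd / β.fst) • DualNumber.eps
    have horth (k : ℕ) (hk : 0 < k) (hkf : k < f) : e0 * σ^[k] e0 = 0 := by
      rw [he0]
      exact single_mul_iterate_shift_single hσ 0 1 1 hk hkf
    have hidem : e0 * e0 = e0 := by rw [he0, ← Pi.single_mul, mul_one]
    have hcomponent : e0 • v0 = e0 • v0' :=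
      hv0 ▸ smul_sum_range_iterate_smul hsl hidem horth (NeZero.pos f) v0'
    have hδ : (fun i => if i = 0 then (β.snd / β.fst) • DualNumber.eps else 0 :
        Fin f → DualNumber L) = (c - 1) * e0 := by
      funext i
      by_cases hi : i = 0 <;> simp [c, he0, hi]
    calc φM v0 = v0 + (φM^[f] (e0 • v0') - e0 • v0') := hv0 ▸ map_sum_range_iterate φM f _
      _ = v0 + (c - 1) • (e0 • v0) := by rw [hf, hcomponent, sub_smul, one_smul]
      _ = _ := by rw [hδ, smul_smul]

/-- Let `S = L[x]/(x²)` and `R = S ⊗ K₀ ≅ ∏_{i<f} S`, with `σ` the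
cyclic-shift Frobenius of `R`.  Let `M = Hom(D_cris(V₀), D_cris(V))`, an `R`-module
with a `σ`-semilinear `φ` such that `φ^f` acts by the scalar
`β/α = 1 + (β'/α)x` (where `α = β mod x`, `β'` the derivative of `β` at `x = 0`), and
let `π : M → M₀ = End(D_cris(V₀))` be the reduction (semilinear over
`R → ∏_{i<f} L`, intertwining `φ` with the `φ` of `M₀`).  Given any lift `v'₀` of the
identity (`π v'₀ = Id`, with `Id` fixed by the Frobenius `φ₀` of `M₀`), the element
`v₀ = ∑_{i<f} φ^i((1,0,…,0)·v'₀)` is again a lift of the identity and satisfies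
`φ(v₀) = v₀ + (β'/α, 0, …, 0)·(x·v₀)`, i.e. in the basis `{v₀, x·v₀}` the matrix of
`φ` is `[[1, (β'/α,0,…,0)], [0, 1]]`. -/
theorem stmt_15 (L : Type) [Field L] (f : ℕ) [NeZero f]
    (M : Type) [AddCommGroup M] [Module (Fin f → DualNumber L) M]
    (σ : (Fin f → DualNumber L) →+* (Fin f → DualNumber L))
    (hσ : ∀ (r : Fin f → DualNumber L) (i : Fin f), σ r i = r (i + 1))
    (φM : M →+ M)
    (hsl : ∀ (r : Fin f → DualNumber L) (m : M), φM (r • m) = σ r • φM m)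
    (β : DualNumber L) (hα : β.fst ≠ 0)
    (hf : ∀ m : M,
      φM^[f] m = ((fun _ => 1 + (β.snd / β.fst) • DualNumber.eps : Fin f → DualNumber L)) • m)
    (M0 : Type) [AddCommGroup M0] [Module (Fin f → L) M0]
    (π : M →+ M0)
    (hπs : ∀ (r : Fin f → DualNumber L) (m : M),
      π (r • m) = (fun i => (r i).fst) • π m)
    (φM0 : M0 →+ M0)
    (hπφ : ∀ m : M, π (φM m) = φM0 (π m))
    (hsl0 : ∀ (s : Fin f → L) (m : M0), φM0 (s • m) = (fun i => s (i + 1)) • φM0 m)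
    (idM0 : M0) (hid : φM0 idM0 = idM0)
    (v0' : M) (hv0' : π v0' = idM0) :
    ∀ e0 : Fin f → DualNumber L, (∀ i, e0 i = if i = 0 then 1 else 0) →
    ∀ v0 : M, v0 = ∑ i ∈ Finset.range f, φM^[i] (e0 • v0') →
      π v0 = idM0
      ∧ φM v0 = v0
          + ((fun i => if i = 0 then (β.snd / β.fst) • DualNumber.eps else 0 :
              Fin f → DualNumber L)) • v0 :=
  stmt_15_general L f M σ hσ φM hsl β hf M0 π hπs φM0 hπφ hsl0 idM0 hid v0' hv0'
end
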